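/- Let S = (β, γ) be a standard symbol. Define ι : Z(S) → Z(S) by ι(j) = ψ(j) and ι(ψ(j)) = j for each pair (j, ψ(j)) of S, and ι(z) = z for every element z of Z(S) not belonging to any pair. Then ι is well defined (both members of every pair of S lie in Z(S) and distinct pairs are disjoint), ι is an involution of Z(S) with exactly r fixed points, and ι is r-admissible. -/

import Mathlib

/-! The greedy matching `ψ` sends each entry of `γ ∖ β` to a smaller entry of `β ∖ γ`, and
standardness forces every entry of `γ` to be matched: otherwise every entry of `β` up to an
unmatched `j` would be the image of an entry of `γ` below `j`, while standardness says that
below any bound `γ` has at most as many entries as `β`. Hence `ι` is an involution of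
`Z(S) = (β ∖ γ) ∪ (γ ∖ β)` whose fixed points are the `|β| - |γ| = r` unmatched entries of `β`.
Because `ψ` is built level by level, the arcs `(ψ j, j)` do not cross and every entry inside an
arc is itself matched. An arc of minimal length then joins two consecutive elements of `Z(S)`,
and removing it preserves all of this, so `r`-admissibility follows by induction on `Z(S)`. -/

namespace LM2003

open scoped BigOperators

/-- `(β, γ)` is a symbol in `Sy(n,k,r)`: two finite sets of integers contained in
`{1, …, n+1}`, of cardinalities `k+r` and `k` (rows are identified with the subsets
they enumerate; strict increase is automatic). -/
def IsSymbol (n k r : ℕ) (β γ : Finset ℤ) : Prop :=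
  β ⊆ Finset.Icc 1 ((n : ℤ) + 1) ∧ γ ⊆ Finset.Icc 1 ((n : ℤ) + 1) ∧
    β.card = k + r ∧ γ.card = k

/-- `(β,γ)` is standard: for each `i < |γ|`, the `i`-th smallest element of `β`
is `≤` the `i`-th smallest element of `γ`. -/
def IsStandard (β γ : Finset ℤ) : Prop :=
  ∀ i : ℕ, i < γ.card → (β.sort (· ≤ ·))[i]! ≤ (γ.sort (· ≤ ·))[i]!

/-- Accumulated data after level `l` of the recursive definition of `ψ`:
the first component is `γ⁰ ∪ ⋯ ∪ γ^l` and the second is `ψ(γ⁰ ∪ ⋯ ∪ γ^l)`. -/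
def psiAcc (β γ : Finset ℤ) : ℕ → Finset ℤ × Finset ℤ
  | 0 => (γ ∩ β, γ ∩ β)
  | l + 1 =>
    let p := psiAcc β γ l
    let g := (γ \ p.1).filter fun j => j - ((l : ℤ) + 1) ∈ β \ p.2
    (p.1 ∪ g, p.2 ∪ g.image fun j => j - ((l : ℤ) + 1))

/-- The level sets `γ^l` in the recursive definition of `ψ`. -/
def gammaL (β γ : Finset ℤ) : ℕ → Finset ℤ
  | 0 => γ ∩ β
  | l + 1 =>
    (γ \ (psiAcc β γ l).1).filter fun j => j - ((l : ℤ) + 1) ∈ β \ (psiAcc β γ l).2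

open Classical in
/-- The map `ψ` : for `j ∈ γ^l` it is `j ↦ j - l` (via the least such `l`),
and the identity elsewhere. -/
noncomputable def psiS (β γ : Finset ℤ) (j : ℤ) : ℤ :=
  if h : ∃ l, j ∈ gammaL β γ l then j - (Nat.find h : ℤ) else j

/-- The pairs of a (standard) symbol: the pairs `(j, ψ(j))` with `j ∈ γ` and `ψ(j) ≠ j`. -/
noncomputable def pairsS (β γ : Finset ℤ) : Finset (ℤ × ℤ) :=
  (γ.filter fun j => psiS β γ j ≠ j).image fun j => (j, psiS β γ j)

/-- Exchanging, for every pair in `T`, the two members between the two rows of `(β,γ)`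
(reordering of rows is automatic for sets). Pairs are written `(j, ψ j)` with `j` in the
bottom row `γ` and `ψ j` in the top row `β`. -/
def swapSymbol (β γ : Finset ℤ) (T : Finset (ℤ × ℤ)) : Finset ℤ × Finset ℤ :=
  ((β \ T.image Prod.snd) ∪ T.image Prod.fst,
   (γ \ T.image Prod.fst) ∪ T.image Prod.snd)

/-- The class `C(S)` of a standard symbol: all symbols obtained by permuting a subset
of its pairs. -/
noncomputable def CSet (β γ : Finset ℤ) : Finset (Finset ℤ × Finset ℤ) :=
  (pairsS β γ).powerset.image (swapSymbol β γ)

/-- The Fock space `F(Λ)`: free `ℚ(v)`-module on the set of all symbols. -/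
abbrev FF : Type := (Finset ℤ × Finset ℤ) →₀ RatFunc ℚ

/-- Standard basis vector `u_S`. -/
noncomputable def uS (S : Finset ℤ × Finset ℤ) : FF := Finsupp.single S 1

/-- The variable `v` of `K = ℚ(v)`. -/
noncomputable def vv : RatFunc ℚ := RatFunc.X

/-- Action of the Chevalley generator `f_j` on the standard basis vector `u_S`. -/
noncomputable def fAct (j : ℤ) (S : Finset ℤ × Finset ℤ) : FF :=
  (if j ∈ S.2 ∧ j + 1 ∉ S.2 then uS (S.1, insert (j + 1) (S.2.erase j)) else 0) +
  (if j ∈ S.1 ∧ j + 1 ∉ S.1 then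
      vv ^ ((if j ∈ S.2 then (1 : ℤ) else 0) - (if j + 1 ∈ S.2 then (1 : ℤ) else 0)) •
        uS (insert (j + 1) (S.1.erase j), S.2)
    else 0)

/-- The Chevalley generator `f_j` as a linear operator on `F`. -/
noncomputable def fLin (j : ℤ) : FF →ₗ[RatFunc ℚ] FF :=
  Finsupp.lsum (RatFunc ℚ) fun S => LinearMap.toSpanSingleton (RatFunc ℚ) FF (fAct j S)

/-- Divided powers: `f_j^{(1)} = f_j`, `f_j^{(2)} = f_j² / (v + v⁻¹)`. -/
noncomputable def fDiv (j : ℤ) (m : ℕ) : FF →ₗ[RatFunc ℚ] FF :=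
  if m = 2 then (vv + vv⁻¹)⁻¹ • (fLin j ∘ₗ fLin j) else fLin j

/-- `b_S = Σ_{Σ ∈ C(S)} v^{n(Σ)} u_Σ`, written as a sum over the subsets `T` of the
set of pairs of `S` (with `n(Σ) = |T|`). -/
noncomputable def bS (β γ : Finset ℤ) : FF :=
  ∑ T ∈ (pairsS β γ).powerset, vv ^ T.card • uS (swapSymbol β γ T)

/-- `ι` is an involution of the finite set `Z`. -/
def IsInvolutionOn (Z : Finset ℤ) (ι : ℤ → ℤ) : Prop :=
  (∀ z ∈ Z, ι z ∈ Z) ∧ ∀ z ∈ Z, ι (ι z) = z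

/-- `z < z'` are consecutive elements of `Z`. -/
def ConsecutiveIn (Z : Finset ℤ) (z z' : ℤ) : Prop :=
  z ∈ Z ∧ z' ∈ Z ∧ z < z' ∧ ∀ x ∈ Z, ¬(z < x ∧ x < z')

/-- `r`-admissible involutions of a finite set `Z` of integers: `ι` is an involution of
`Z` with exactly `r` fixed points, and either `|Z| = r`, or there are two consecutive
elements `z < z'` of `Z` with `ι z = z'` whose removal again yields an `r`-admissible
involution. -/
inductive IsAdmissible (r : ℕ) : Finset ℤ → (ℤ → ℤ) → Prop
  | base (Z : Finset ℤ) (ι : ℤ → ℤ) (hinv : IsInvolutionOn Z ι)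
      (hfix : (Z.filter fun z => ι z = z).card = r) (hcard : Z.card = r) :
      IsAdmissible r Z ι
  | step (Z : Finset ℤ) (ι : ℤ → ℤ) (z z' : ℤ) (hinv : IsInvolutionOn Z ι)
      (hfix : (Z.filter fun w => ι w = w).card = r)
      (hcons : ConsecutiveIn Z z z') (hzz : ι z = z')
      (hrec : IsAdmissible r (Z \ {z, z'}) ι) :
      IsAdmissible r Z ι

/-- `c_j(S)`: number of occurrences of `j` among the entries of the symbol `(β,γ)`. -/
def contentS (β γ : Finset ℤ) (j : ℤ) : ℕ :=
  (if j ∈ β then 1 else 0) + (if j ∈ γ then 1 else 0)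

open Finset

section SortedEnumeration

variable {α : Type*} [LinearOrder α] [Inhabited α]

theorem getElem!_sort_le_iff (s : Finset α) {i : ℕ} (hi : i < #s) (x : α) :
    (s.sort (· ≤ ·))[i]! ≤ x ↔ i < #(s.filter (· ≤ x)) := by
  set f := s.orderEmbOfFin rfl
  have hfi : (s.sort (· ≤ ·))[i]! = f ⟨i, hi⟩ := by
    rw [getElem!_pos _ _ (by simpa using hi)]
    rfl
  have hcard : #(s.filter (· ≤ x)) = #(univ.filter fun m => f m ≤ x) := by
    have hs := congrArg (fun t => #(t.filter (· ≤ x))) (map_orderEmbOfFin_univ s rfl).symm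
    rw [filter_map, card_map] at hs
    exact hs
  rw [hfi, hcard]
  constructor
  · intro h
    have hsub : Iic (⟨i, hi⟩ : Fin #s) ⊆ univ.filter fun m => f m ≤ x := fun m hm =>
      mem_filter.2 ⟨mem_univ _, (f.le_iff_le.2 (mem_Iic.1 hm)).trans h⟩
    simpa using card_le_card hsub
  · intro h
    by_contra! hlt
    have hsub : univ.filter (fun m => f m ≤ x) ⊆ Iio ⟨i, hi⟩ := fun m hm =>
      mem_Iio.2 (f.lt_iff_lt.1 ((mem_filter.1 hm).2.trans_lt hlt))
    have := card_le_card hsub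
    simp only [Fin.card_Iio] at this
    omega

end SortedEnumeration

variable {β γ : Finset ℤ}

theorem IsStandard.card_filter_le_card_filter (hstd : IsStandard β γ) (hcard : #γ ≤ #β)
    (x : ℤ) :
    #(γ.filter (· ≤ x)) ≤ #(β.filter (· ≤ x)) := by
  set c := #(γ.filter (· ≤ x))
  rcases Nat.eq_zero_or_pos c with hc | hc
  · omega
  have hi : c - 1 < #γ := by
    have := card_filter_le γ (· ≤ x)
    omega
  have hγ := (getElem!_sort_le_iff γ hi x).2 (by omega)
  have hβ := (getElem!_sort_le_iff β (by omega) x).1 ((hstd _ hi).trans hγ)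
  omega

section Levels

theorem psiAcc_succ (l : ℕ) : psiAcc β γ (l + 1) =
    ((psiAcc β γ l).1 ∪ gammaL β γ (l + 1),
      (psiAcc β γ l).2 ∪ (gammaL β γ (l + 1)).image fun j => j - ((l : ℤ) + 1)) := rfl

theorem mem_gammaL_zero {j : ℤ} : j ∈ gammaL β γ 0 ↔ j ∈ γ ∧ j ∈ β := mem_inter

theorem mem_gammaL_succ {j : ℤ} {l : ℕ} :
    j ∈ gammaL β γ (l + 1) ↔ j ∈ γ ∧ j ∉ (psiAcc β γ l).1 ∧
      j - (l + 1 : ℕ) ∈ β ∧ j - (l + 1 : ℕ) ∉ (psiAcc β γ l).2 := by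
  simp [gammaL, and_assoc]

theorem mem_psiAcc_fst_iff {j : ℤ} {l : ℕ} :
    j ∈ (psiAcc β γ l).1 ↔ ∃ s ≤ l, j ∈ gammaL β γ s := by
  induction l with
  | zero => simp [psiAcc, gammaL]
  | succ l ih => simp [psiAcc_succ, ih, Nat.le_succ_iff, or_and_right, exists_or]

theorem mem_psiAcc_snd_iff {b : ℤ} {l : ℕ} :
    b ∈ (psiAcc β γ l).2 ↔ ∃ s ≤ l, ∃ j ∈ gammaL β γ s, j - s = b := by
  induction l with
  | zero => simp [psiAcc, gammaL]
  | succ l ih => simp [psiAcc_succ, ih, Nat.le_succ_iff, or_and_right, exists_or]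

theorem gammaL_subset (s : ℕ) : gammaL β γ s ⊆ γ := by
  cases s with
  | zero => exact inter_subset_left
  | succ s => exact fun j hj => (mem_gammaL_succ.1 hj).1

theorem sub_mem_of_mem_gammaL {j : ℤ} {s : ℕ} (hj : j ∈ gammaL β γ s) : j - s ∈ β := by
  cases s with
  | zero => simpa using (mem_gammaL_zero.1 hj).2
  | succ s => exact (mem_gammaL_succ.1 hj).2.2.1

theorem eq_of_mem_gammaL {j : ℤ} {s t : ℕ} (hs : j ∈ gammaL β γ s) (ht : j ∈ gammaL β γ t) :
    s = t := by
  by_contra hne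
  wlog hlt : s < t generalizing s t
  · exact this ht hs (Ne.symm hne) (by omega)
  obtain ⟨t, rfl⟩ : ∃ u, t = u + 1 := ⟨t - 1, by omega⟩
  exact (mem_gammaL_succ.1 ht).2.1 (mem_psiAcc_fst_iff.2 ⟨s, by omega, hs⟩)

theorem eq_of_mem_gammaL_of_sub_eq {j j' : ℤ} {s s' : ℕ} (hj : j ∈ gammaL β γ s)
    (hj' : j' ∈ gammaL β γ s') (h : j - s = j' - s') : s = s' := by
  by_contra hne
  wlog hlt : s < s' generalizing j j' s s'
  · exact this hj' hj h.symm (Ne.symm hne) (by omega)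
  obtain ⟨t, rfl⟩ : ∃ t, s' = t + 1 := ⟨s' - 1, by omega⟩
  exact (mem_gammaL_succ.1 hj').2.2.2 (mem_psiAcc_snd_iff.2 ⟨s, by omega, j, hj, h⟩)

theorem mem_sdiff_of_mem_gammaL {j : ℤ} {l : ℕ} (hl : 0 < l) (hj : j ∈ gammaL β γ l) :
    j ∈ γ \ β ∧ j - l ∈ β \ γ := by
  obtain ⟨m, rfl⟩ : ∃ m, l = m + 1 := ⟨l - 1, by omega⟩
  obtain ⟨hjγ, hfst, hb, hsnd⟩ := mem_gammaL_succ.1 hj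
  refine ⟨mem_sdiff.2 ⟨hjγ, fun hjβ => hfst ?_⟩, mem_sdiff.2 ⟨hb, fun hbγ => hsnd ?_⟩⟩
  · exact mem_psiAcc_fst_iff.2 ⟨0, Nat.zero_le m, mem_gammaL_zero.2 ⟨hjγ, hjβ⟩⟩
  · exact mem_psiAcc_snd_iff.2 ⟨0, Nat.zero_le m, _, mem_gammaL_zero.2 ⟨hbγ, hb⟩, by simp⟩

/-- An element of `γ` not yet matched by level `d` finds the `β`-entry at distance `d`
already taken by an earlier level. -/
theorem exists_mem_gammaL_sub_eq {j : ℤ} {d : ℕ} (hj : j ∈ γ)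
    (hd : ∀ s ≤ d, j ∉ gammaL β γ s) (hb : j - d ∈ β) :
    ∃ s < d, ∃ j' ∈ gammaL β γ s, j' - s = j - d := by
  cases d with
  | zero => exact absurd (mem_gammaL_zero.2 ⟨hj, by simpa using hb⟩) (hd 0 le_rfl)
  | succ m =>
    have hfst : j ∉ (psiAcc β γ m).1 := fun h => by
      obtain ⟨s, hs, hjs⟩ := mem_psiAcc_fst_iff.1 h
      exact hd s (by omega) hjs
    have hsnd : j - (m + 1 : ℕ) ∈ (psiAcc β γ m).2 := by
      by_contra h
      exact hd (m + 1) le_rfl (mem_gammaL_succ.2 ⟨hj, hfst, hb, h⟩)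
    obtain ⟨s, hs, j', hj', h⟩ := mem_psiAcc_snd_iff.1 hsnd
    exact ⟨s, by omega, j', hj', h⟩

theorem exists_mem_gammaL_lt {j b : ℤ} {l : ℕ} (hj : j ∈ gammaL β γ l) (hb : b ∈ β)
    (h₁ : j - l < b) (h₂ : b ≤ j) : ∃ s, ∃ j' ∈ gammaL β γ s, j' - s = b ∧ j' < j := by
  obtain ⟨d, rfl⟩ : ∃ d : ℕ, b = j - d := ⟨(j - b).toNat, by omega⟩
  obtain ⟨s, hsd, j', hj', h⟩ := exists_mem_gammaL_sub_eq (gammaL_subset l hj)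
    (fun s _ hjs => by have := eq_of_mem_gammaL hjs hj; omega) hb
  exact ⟨s, j', hj', h, by omega⟩

end Levels

section Psi

theorem psiS_eq_of_mem_gammaL {j : ℤ} {l : ℕ} (hl : j ∈ gammaL β γ l) :
    psiS β γ j = j - l := by
  have h : ∃ l, j ∈ gammaL β γ l := ⟨l, hl⟩
  rw [psiS, dif_pos h, eq_of_mem_gammaL (Nat.find_spec h) hl]

/-- If some `j ∈ γ` were never matched, every `b ∈ β` with `b ≤ j` would be `ψ` of an element
of `γ` below `j`, contradicting the counting inequality given by standardness. -/
theorem IsStandard.exists_mem_gammaL (hstd : IsStandard β γ) (hcard : #γ ≤ #β) {j : ℤ}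
    (hj : j ∈ γ) : ∃ l, j ∈ gammaL β γ l := by
  by_contra! hnot
  have hsub : β.filter (· ≤ j) ⊆ (γ.filter (· < j)).image (psiS β γ) := by
    intro b hb
    obtain ⟨hbβ, hbj⟩ := mem_filter.1 hb
    obtain ⟨d, rfl⟩ : ∃ d : ℕ, b = j - d := ⟨(j - b).toNat, by omega⟩
    obtain ⟨s, hs, j', hj', h⟩ := exists_mem_gammaL_sub_eq hj (fun s _ => hnot s) hbβ
    exact mem_image.2 ⟨j', mem_filter.2 ⟨gammaL_subset s hj', by omega⟩,
      by rw [psiS_eq_of_mem_gammaL hj', h]⟩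
  have hlt : #(γ.filter (· < j)) < #(γ.filter (· ≤ j)) :=
    card_lt_card (ssubset_iff_of_subset (monotone_filter_right γ fun _ _ => le_of_lt) |>.2
      ⟨j, mem_filter.2 ⟨hj, le_rfl⟩, by simp⟩)
  have := (card_le_card hsub).trans card_image_le
  have := hstd.card_filter_le_card_filter hcard j
  omega

theorem exists_pos_mem_gammaL (htot : ∀ j ∈ γ, ∃ l, j ∈ gammaL β γ l) {g : ℤ}
    (hg : g ∈ γ \ β) : ∃ l, 0 < l ∧ g ∈ gammaL β γ l := by
  obtain ⟨hgγ, hgβ⟩ := mem_sdiff.1 hg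
  obtain ⟨l, hl⟩ := htot g hgγ
  refine ⟨l, Nat.pos_of_ne_zero fun h => hgβ ?_, hl⟩
  subst h
  exact (mem_gammaL_zero.1 hl).2

theorem psiS_mem_sdiff (htot : ∀ j ∈ γ, ∃ l, j ∈ gammaL β γ l) {g : ℤ} (hg : g ∈ γ \ β) :
    psiS β γ g ∈ β \ γ := by
  obtain ⟨l, hl, hgl⟩ := exists_pos_mem_gammaL htot hg
  rw [psiS_eq_of_mem_gammaL hgl]
  exact (mem_sdiff_of_mem_gammaL hl hgl).2

theorem psiS_lt (htot : ∀ j ∈ γ, ∃ l, j ∈ gammaL β γ l) {g : ℤ} (hg : g ∈ γ \ β) :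
    psiS β γ g < g := by
  obtain ⟨l, hl, hgl⟩ := exists_pos_mem_gammaL htot hg
  rw [psiS_eq_of_mem_gammaL hgl]
  omega

theorem psiS_injOn (htot : ∀ j ∈ γ, ∃ l, j ∈ gammaL β γ l) : Set.InjOn (psiS β γ) γ := by
  intro j hj j' hj' h
  obtain ⟨l, hl⟩ := htot j hj
  obtain ⟨l', hl'⟩ := htot j' hj'
  rw [psiS_eq_of_mem_gammaL hl, psiS_eq_of_mem_gammaL hl'] at h
  have := eq_of_mem_gammaL_of_sub_eq hl hl' h
  omega

theorem mem_pairsS_iff (htot : ∀ j ∈ γ, ∃ l, j ∈ gammaL β γ l) {p : ℤ × ℤ} :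
    p ∈ pairsS β γ ↔ p.1 ∈ γ \ β ∧ p.2 = psiS β γ p.1 := by
  have hne : ∀ j ∈ γ, psiS β γ j ≠ j ↔ j ∉ β := fun j hj =>
    ⟨fun h hjβ => h (by simpa using psiS_eq_of_mem_gammaL (mem_gammaL_zero.2 ⟨hj, hjβ⟩)),
      fun h => (psiS_lt htot (mem_sdiff.2 ⟨hj, h⟩)).ne⟩
  simp only [pairsS, mem_image, mem_filter, mem_sdiff]
  constructor
  · rintro ⟨j, ⟨hj, hjψ⟩, rfl⟩
    exact ⟨⟨hj, (hne j hj).1 hjψ⟩, rfl⟩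
  · rintro ⟨⟨hj, hjβ⟩, h⟩
    exact ⟨p.1, ⟨hj, (hne _ hj).2 hjβ⟩, by rw [← h]⟩

theorem exists_psiS_eq_of_mem_Ioo (htot : ∀ j ∈ γ, ∃ l, j ∈ gammaL β γ l) {g x : ℤ}
    (hg : g ∈ γ \ β) (hx : x ∈ β \ γ) (h₁ : psiS β γ g < x) (h₂ : x < g) :
    ∃ g' ∈ γ \ β, psiS β γ g' = x ∧ g' < g := by
  obtain ⟨l, -, hgl⟩ := exists_pos_mem_gammaL htot hg
  rw [psiS_eq_of_mem_gammaL hgl] at h₁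
  obtain ⟨hxβ, hxγ⟩ := mem_sdiff.1 hx
  obtain ⟨s, g', hg', hsub, hlt⟩ := exists_mem_gammaL_lt hgl hxβ h₁ h₂.le
  have hs : 0 < s := Nat.pos_of_ne_zero fun h => hxγ (by
    subst h
    simpa [← hsub] using gammaL_subset 0 hg')
  exact ⟨g', (mem_sdiff_of_mem_gammaL hs hg').1, by rw [psiS_eq_of_mem_gammaL hg', hsub], hlt⟩

theorem psiS_lt_psiS_of_mem_Ioo (htot : ∀ j ∈ γ, ∃ l, j ∈ gammaL β γ l) {g x : ℤ}
    (hg : g ∈ γ \ β) (hx : x ∈ γ \ β) (h₁ : psiS β γ g < x) (h₂ : x < g) :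
    psiS β γ g < psiS β γ x := by
  obtain ⟨l, -, hgl⟩ := exists_pos_mem_gammaL htot hg
  obtain ⟨m, -, hxm⟩ := exists_pos_mem_gammaL htot hx
  rw [psiS_eq_of_mem_gammaL hgl, psiS_eq_of_mem_gammaL hxm] at *
  by_contra! hle
  rcases hle.lt_or_eq with hlt | heq
  · obtain ⟨s, j', hj', hsub, hj'x⟩ :=
      exists_mem_gammaL_lt hxm (sub_mem_of_mem_gammaL hgl) hlt h₁.le
    have := eq_of_mem_gammaL_of_sub_eq hj' hgl hsub
    omega
  · have := eq_of_mem_gammaL_of_sub_eq hxm hgl heq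
    omega

end Psi

section PairInvolution

variable {α : Type*} {A : Finset α} {f : α → α}

open Classical in
noncomputable def pairInvolution (A : Finset α) (f : α → α) (z : α) : α :=
  if z ∈ A then f z else if h : ∃ a ∈ A, f a = z then h.choose else z

theorem pairInvolution_of_mem {a : α} (ha : a ∈ A) : pairInvolution A f a = f a := by
  simp [pairInvolution, ha]

theorem pairInvolution_apply (hinj : Set.InjOn f A) (hfA : ∀ a ∈ A, f a ∉ A) {a : α}
    (ha : a ∈ A) : pairInvolution A f (f a) = a := by
  have h : ∃ a' ∈ A, f a' = f a := ⟨a, ha, rfl⟩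
  rw [pairInvolution, if_neg (hfA a ha), dif_pos h]
  exact hinj h.choose_spec.1 ha h.choose_spec.2

theorem pairInvolution_of_not_mem {z : α} (hz : z ∉ A) (hzf : ∀ a ∈ A, f a ≠ z) :
    pairInvolution A f z = z := by
  rw [pairInvolution, if_neg hz, dif_neg (by simpa using hzf)]

theorem card_filter_pairInvolution_eq_self [DecidableEq α] {B : Finset α}
    (hf : ∀ a ∈ A, f a ∈ B) (hinj : Set.InjOn f A) (hAB : Disjoint A B) :
    #((B ∪ A).filter fun z => pairInvolution A f z = z) = #B - #A := by
  have hfA : ∀ a ∈ A, f a ∉ A := fun a ha h => disjoint_left.1 hAB h (hf a ha)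
  have hfix : (B ∪ A).filter (fun z => pairInvolution A f z = z) = B \ A.image f := by
    ext z
    simp only [mem_filter, mem_union, mem_sdiff, mem_image, not_exists, not_and]
    constructor
    · rintro ⟨hz, hιz⟩
      have hzA : z ∉ A := fun hzA => hfA z hzA (by rwa [← pairInvolution_of_mem (f := f) hzA, hιz])
      refine ⟨hz.resolve_right hzA, fun a ha haz => hzA ?_⟩
      subst haz
      rw [pairInvolution_apply hinj hfA ha] at hιz
      rwa [← hιz]
    · rintro ⟨hzB, hzf⟩
      exact ⟨Or.inl hzB, pairInvolution_of_not_mem (disjoint_right.1 hAB hzB) hzf⟩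
  rw [hfix, card_sdiff_of_subset (image_subset_iff.2 hf), card_image_of_injOn hinj]

end PairInvolution

theorem isInvolutionOn_pairInvolution {A B : Finset ℤ} {f : ℤ → ℤ} (hf : ∀ a ∈ A, f a ∈ B)
    (hinj : Set.InjOn f A) (hAB : Disjoint A B) : IsInvolutionOn (B ∪ A) (pairInvolution A f) := by
  have hfA : ∀ a ∈ A, f a ∉ A := fun a ha h => disjoint_left.1 hAB h (hf a ha)
  constructor <;> intro z hz <;> by_cases hzA : z ∈ A
  · rw [pairInvolution_of_mem hzA]
    exact mem_union_left _ (hf z hzA)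
  · by_cases hzf : ∃ a ∈ A, f a = z
    · obtain ⟨a, ha, rfl⟩ := hzf
      rw [pairInvolution_apply hinj hfA ha]
      exact mem_union_right _ ha
    · rwa [pairInvolution_of_not_mem hzA fun a ha h => hzf ⟨a, ha, h⟩]
  · rw [pairInvolution_of_mem hzA, pairInvolution_apply hinj hfA hzA]
  · by_cases hzf : ∃ a ∈ A, f a = z
    · obtain ⟨a, ha, rfl⟩ := hzf
      rw [pairInvolution_apply hinj hfA ha, pairInvolution_of_mem ha]
    · have hιz := pairInvolution_of_not_mem hzA fun a ha h => hzf ⟨a, ha, h⟩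
      rw [hιz, hιz]

section Admissible

variable {Z : Finset ℤ} {ι : ℤ → ℤ}

/-- Every arc `z < ι z` of `ι` encloses only arcs, and these lie strictly inside it. -/
def IsNestedOn (Z : Finset ℤ) (ι : ℤ → ℤ) : Prop :=
  ∀ z ∈ Z, z < ι z → ∀ x ∈ Z, z < x → x < ι z → z < ι x ∧ ι x < ι z ∧ ι x ≠ x

theorem IsNestedOn.mono {Y : Finset ℤ} (h : IsNestedOn Z ι) (hYZ : Y ⊆ Z) : IsNestedOn Y ι :=
  fun z hz hzι x hx => h z (hYZ hz) hzι x (hYZ hx)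

theorem IsInvolutionOn.sdiff_pair (h : IsInvolutionOn Z ι) {z : ℤ} (hz : z ∈ Z) :
    IsInvolutionOn (Z \ {z, ι z}) ι := by
  refine ⟨fun x hx => ?_, fun x hx => h.2 x (mem_sdiff.1 hx).1⟩
  obtain ⟨hxZ, hxz⟩ := mem_sdiff.1 hx
  simp only [mem_insert, mem_singleton, not_or] at hxz ⊢
  refine mem_sdiff.2 ⟨h.1 x hxZ, ?_⟩
  simp only [mem_insert, mem_singleton, not_or]
  exact ⟨fun h' => hxz.2 (by rw [← h', h.2 x hxZ]),
    fun h' => hxz.1 (by rw [← h.2 x hxZ, h', h.2 z hz])⟩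

theorem filter_sdiff_pair_fixed (h : IsInvolutionOn Z ι) {z : ℤ} (hz : z ∈ Z) (hzι : ι z ≠ z) :
    (Z \ {z, ι z}).filter (fun w => ι w = w) = Z.filter fun w => ι w = w := by
  ext w
  simp only [mem_filter, mem_sdiff, mem_insert, mem_singleton]
  constructor
  · exact fun ⟨⟨hw, _⟩, hιw⟩ => ⟨hw, hιw⟩
  · rintro ⟨hw, hιw⟩
    refine ⟨⟨hw, ?_⟩, hιw⟩
    rintro (rfl | rfl)
    · exact hzι hιw
    · exact hzι (hιw.symm.trans (h.2 z hz))

/-- An arc of minimal length has no point of `Z` strictly inside it. -/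
theorem IsNestedOn.exists_consecutiveIn (hinv : IsInvolutionOn Z ι) (hn : IsNestedOn Z ι)
    (hne : ∃ z ∈ Z, ι z ≠ z) : ∃ z ∈ Z, ι z ≠ z ∧ ConsecutiveIn Z z (ι z) := by
  have harcs : (Z.filter fun z => z < ι z).Nonempty := by
    obtain ⟨w, hw, hιw⟩ := hne
    rcases hιw.lt_or_gt with h | h
    · exact ⟨ι w, mem_filter.2 ⟨hinv.1 w hw, by rwa [hinv.2 w hw]⟩⟩
    · exact ⟨w, mem_filter.2 ⟨hw, h⟩⟩
  obtain ⟨z, hz, hmin⟩ := exists_min_image _ (fun z => ι z - z) harcs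
  obtain ⟨hzZ, hzι⟩ := mem_filter.1 hz
  refine ⟨z, hzZ, hzι.ne', hzZ, hinv.1 z hzZ, hzι, fun x hxZ ⟨h₁, h₂⟩ => ?_⟩
  obtain ⟨h₃, h₄, hιx⟩ := hn z hzZ hzι x hxZ h₁ h₂
  rcases hιx.lt_or_gt with h | h
  · have := hmin (ι x) (mem_filter.2 ⟨hinv.1 x hxZ, by rwa [hinv.2 x hxZ]⟩)
    rw [hinv.2 x hxZ] at this
    omega
  · have := hmin x (mem_filter.2 ⟨hxZ, h⟩)
    omega

theorem isAdmissible_of_isNestedOn {r : ℕ} (hinv : IsInvolutionOn Z ι)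
    (hfix : #(Z.filter fun z => ι z = z) = r) (hn : IsNestedOn Z ι) : IsAdmissible r Z ι := by
  induction Z using Finset.strongInduction with
  | H Z ih =>
    by_cases hall : ∀ z ∈ Z, ι z = z
    · exact .base Z ι hinv hfix (by rwa [filter_true_of_mem hall] at hfix)
    push Not at hall
    obtain ⟨z, hz, hzι, hcons⟩ := hn.exists_consecutiveIn hinv hall
    refine .step Z ι z (ι z) hinv hfix hcons rfl
      (ih _ ?_ (hinv.sdiff_pair hz) ?_ (hn.mono sdiff_subset))
    · exact sdiff_ssubset (insert_subset hz (singleton_subset_iff.2 (hinv.1 z hz)))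
        ⟨z, mem_insert_self _ _⟩
    · rwa [filter_sdiff_pair_fixed hinv hz hzι]

end Admissible

section Symbol

/-- The involution `ι` of `Z(S)`. -/
noncomputable def iotaS (β γ : Finset ℤ) : ℤ → ℤ := pairInvolution (γ \ β) (psiS β γ)

theorem iotaS_of_mem {g : ℤ} (hg : g ∈ γ \ β) : iotaS β γ g = psiS β γ g :=
  pairInvolution_of_mem hg

theorem injOn_psiS_sdiff (htot : ∀ j ∈ γ, ∃ l, j ∈ gammaL β γ l) :
    Set.InjOn (psiS β γ) ↑(γ \ β) :=
  (psiS_injOn htot).mono (coe_subset.2 sdiff_subset)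

theorem iotaS_psiS (htot : ∀ j ∈ γ, ∃ l, j ∈ gammaL β γ l) {g : ℤ} (hg : g ∈ γ \ β) :
    iotaS β γ (psiS β γ g) = g :=
  pairInvolution_apply (injOn_psiS_sdiff htot)
    (fun _ ha h => disjoint_left.1 disjoint_sdiff_sdiff h (psiS_mem_sdiff htot ha)) hg

theorem isInvolutionOn_iotaS (htot : ∀ j ∈ γ, ∃ l, j ∈ gammaL β γ l) :
    IsInvolutionOn ((β \ γ) ∪ (γ \ β)) (iotaS β γ) :=
  isInvolutionOn_pairInvolution (fun _ ha => psiS_mem_sdiff htot ha) (injOn_psiS_sdiff htot)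
    disjoint_sdiff_sdiff

theorem card_filter_iotaS_eq_self (htot : ∀ j ∈ γ, ∃ l, j ∈ gammaL β γ l) :
    #(((β \ γ) ∪ (γ \ β)).filter fun z => iotaS β γ z = z) = #β - #γ := by
  rw [iotaS, card_filter_pairInvolution_eq_self (fun _ ha => psiS_mem_sdiff htot ha)
    (injOn_psiS_sdiff htot) disjoint_sdiff_sdiff]
  have := card_sdiff_add_card_inter β γ
  have := card_sdiff_add_card_inter γ β
  rw [inter_comm] at this
  omega

theorem isNestedOn_iotaS (htot : ∀ j ∈ γ, ∃ l, j ∈ gammaL β γ l) :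
    IsNestedOn ((β \ γ) ∪ (γ \ β)) (iotaS β γ) := by
  intro z hz hzι x hx h₁ h₂
  obtain ⟨g, hg, rfl⟩ : ∃ g ∈ γ \ β, psiS β γ g = z := by
    by_contra hnot
    rcases mem_union.1 hz with hzB | hzA
    · rw [iotaS, pairInvolution_of_not_mem (disjoint_right.1 disjoint_sdiff_sdiff hzB)
        fun a ha h => hnot ⟨a, ha, h⟩] at hzι
      exact hzι.false
    · rw [iotaS_of_mem hzA] at hzι
      exact (psiS_lt htot hzA).not_gt hzι
  rw [iotaS_psiS htot hg] at h₂ ⊢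
  rcases mem_union.1 hx with hxB | hxA
  · obtain ⟨g', hg', rfl, hg'g⟩ := exists_psiS_eq_of_mem_Ioo htot hg hxB h₁ h₂
    rw [iotaS_psiS htot hg']
    have := psiS_lt htot hg'
    exact ⟨by omega, hg'g, this.ne'⟩
  · rw [iotaS_of_mem hxA]
    have := psiS_lt htot hxA
    exact ⟨psiS_lt_psiS_of_mem_Ioo htot hg hxA h₁ h₂, by omega, this.ne⟩

theorem pairsS_disjoint (htot : ∀ j ∈ γ, ∃ l, j ∈ gammaL β γ l) {p q : ℤ × ℤ}
    (hp : p ∈ pairsS β γ) (hq : q ∈ pairsS β γ) (hpq : p ≠ q) :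
    p.1 ≠ q.1 ∧ p.1 ≠ q.2 ∧ p.2 ≠ q.1 ∧ p.2 ≠ q.2 := by
  obtain ⟨hp₁, hp₂⟩ := (mem_pairsS_iff htot).1 hp
  obtain ⟨hq₁, hq₂⟩ := (mem_pairsS_iff htot).1 hq
  have hψp := psiS_mem_sdiff htot hp₁
  have hψq := psiS_mem_sdiff htot hq₁
  rw [← hp₂] at hψp
  rw [← hq₂] at hψq
  have h₁ : p.1 ≠ q.1 := fun h => hpq (Prod.ext h (by rw [hp₂, hq₂, h]))
  refine ⟨h₁, fun h => ?_, fun h => ?_, fun h => h₁ ?_⟩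
  · exact (mem_sdiff.1 hp₁).2 (h ▸ (mem_sdiff.1 hψq).1)
  · exact (mem_sdiff.1 hq₁).2 (h ▸ (mem_sdiff.1 hψp).1)
  · exact psiS_injOn htot (mem_sdiff.1 hp₁).1 (mem_sdiff.1 hq₁).1 (by rw [← hp₂, ← hq₂, h])

end Symbol

theorem statement7_general (n k r : ℕ)
    (β γ : Finset ℤ) (hS : IsSymbol n k r β γ) (hstd : IsStandard β γ) :
    (∀ p ∈ pairsS β γ, p.1 ∈ (β ∪ γ) \ (β ∩ γ) ∧ p.2 ∈ (β ∪ γ) \ (β ∩ γ)) ∧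
    (∀ p ∈ pairsS β γ, ∀ q ∈ pairsS β γ, p ≠ q →
        p.1 ≠ q.1 ∧ p.1 ≠ q.2 ∧ p.2 ≠ q.1 ∧ p.2 ≠ q.2) ∧
    ∃ ι : ℤ → ℤ,
      (∀ p ∈ pairsS β γ, ι p.1 = p.2 ∧ ι p.2 = p.1) ∧
      (∀ z ∈ (β ∪ γ) \ (β ∩ γ), (∀ p ∈ pairsS β γ, z ≠ p.1 ∧ z ≠ p.2) → ι z = z) ∧
      IsInvolutionOn ((β ∪ γ) \ (β ∩ γ)) ι ∧
      (((β ∪ γ) \ (β ∩ γ)).filter fun z => ι z = z).card = r ∧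
      IsAdmissible r ((β ∪ γ) \ (β ∩ γ)) ι := by
  obtain ⟨-, -, hβ, hγ⟩ := hS
  have htot : ∀ j ∈ γ, ∃ l, j ∈ gammaL β γ l := fun j hj =>
    hstd.exists_mem_gammaL (by omega) hj
  have hfix : #(((β \ γ) ∪ (γ \ β)).filter fun z => iotaS β γ z = z) = r := by
    rw [card_filter_iotaS_eq_self htot]
    omega
  have hZ : (β ∪ γ) \ (β ∩ γ) = (β \ γ) ∪ (γ \ β) :=
    (_root_.symmDiff_eq_sup_sdiff_inf (a := β) (b := γ)).symm.trans (symmDiff_def β γ)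
  rw [hZ]
  refine ⟨fun p hp => ?_, fun p hp q hq => pairsS_disjoint htot hp hq, iotaS β γ,
    fun p hp => ?_, fun z _ hzp => ?_, isInvolutionOn_iotaS htot, hfix,
    isAdmissible_of_isNestedOn (isInvolutionOn_iotaS htot) hfix (isNestedOn_iotaS htot)⟩
  · obtain ⟨hp₁, hp₂⟩ := (mem_pairsS_iff htot).1 hp
    rw [hp₂]
    exact ⟨mem_union_right _ hp₁, mem_union_left _ (psiS_mem_sdiff htot hp₁)⟩
  · obtain ⟨hp₁, hp₂⟩ := (mem_pairsS_iff htot).1 hp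
    rw [hp₂]
    exact ⟨iotaS_of_mem hp₁, iotaS_psiS htot hp₁⟩
  · have hpair : ∀ a ∈ γ \ β, (a, psiS β γ a) ∈ pairsS β γ :=
      fun a ha => (mem_pairsS_iff htot).2 ⟨ha, rfl⟩
    exact pairInvolution_of_not_mem (fun hzA => (hzp _ (hpair z hzA)).1 rfl)
      fun a ha h => (hzp _ (hpair a ha)).2 h.symm

/-- Lemma 4.1 (a): for a standard symbol `S`, the pairs of `S` have both
members in `Z(S)`, distinct pairs are disjoint, and the involution `ι` of `Z(S)` whose
nontrivial orbits are the pairs of `S` is an involution of `Z(S)` with exactly `r`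
fixed points, and is `r`-admissible. -/
theorem statement7 (n k r : ℕ) (hn : 2 ≤ n) (hk : 1 ≤ k) (hkr : k + r ≤ n)
    (β γ : Finset ℤ) (hS : IsSymbol n k r β γ) (hstd : IsStandard β γ) :
    (∀ p ∈ pairsS β γ, p.1 ∈ (β ∪ γ) \ (β ∩ γ) ∧ p.2 ∈ (β ∪ γ) \ (β ∩ γ)) ∧
    (∀ p ∈ pairsS β γ, ∀ q ∈ pairsS β γ, p ≠ q →
        p.1 ≠ q.1 ∧ p.1 ≠ q.2 ∧ p.2 ≠ q.1 ∧ p.2 ≠ q.2) ∧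
    ∃ ι : ℤ → ℤ,
      (∀ p ∈ pairsS β γ, ι p.1 = p.2 ∧ ι p.2 = p.1) ∧
      (∀ z ∈ (β ∪ γ) \ (β ∩ γ), (∀ p ∈ pairsS β γ, z ≠ p.1 ∧ z ≠ p.2) → ι z = z) ∧
      IsInvolutionOn ((β ∪ γ) \ (β ∩ γ)) ι ∧
      (((β ∪ γ) \ (β ∩ γ)).filter fun z => ι z = z).card = r ∧
      IsAdmissible r ((β ∪ γ) \ (β ∩ γ)) ι :=
  statement7_general n k r β γ hS hstd

end LM2003
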